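/- arXiv:2411.08962 — 5 statements merged into one kernel-verified Lean document; each statement's English description precedes it below -/
import Mathlib

section
/- Let F be a field, let p be a polynomial in m variables with coefficients in F that is not the zero polynomial and has total degree at most d, and let C be a nonempty finite subset of F. If r_1, ..., r_m are chosen independently and uniformly at random from C, then the probability that p(r_1, ..., r_m) = 0 is at most d / |C|. -/
open MvPolynomial Finset

lemma schwartz_zippel_nat {F : Type*} [Field F] [DecidableEq F] :
    ∀ (m : ℕ) (p : MvPolynomial (Fin m) F), p ≠ 0 → ∀ C : Finset F,
    ((Fintype.piFinset fun _ : Fin m => C).filter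
        fun a => MvPolynomial.eval a p = 0).card * C.card
      ≤ p.totalDegree * C.card ^ m := by
  intro m
  induction m with
  | zero =>
    intro p hp C
    obtain ⟨c, rfl⟩ := (MvPolynomial.C_surjective (Fin 0)) p
    have hc : c ≠ 0 := fun h => hp (by simp [h])
    have : ((Fintype.piFinset fun _ : Fin 0 => C).filter
        fun a => MvPolynomial.eval a (MvPolynomial.C c) = 0) = ∅ := by
      apply Finset.filter_false_of_mem
      intro a _
      simpa using hc
    simp [this, hc]
  | succ m IH =>
    intro p hp C
    set q := MvPolynomial.finSuccEquiv F m p with hq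
    have hq0 : q ≠ 0 := by
      simp [hq, EmbeddingLike.map_ne_zero_iff, hp]
    set k := q.natDegree with hk
    set lc := q.leadingCoeff with hlc
    have hlc0 : lc ≠ 0 := Polynomial.leadingCoeff_ne_zero.mpr hq0
    have hdeg : lc.totalDegree + k ≤ p.totalDegree := by
      have := MvPolynomial.totalDegree_coeff_finSuccEquiv_add_le p k
        (by rwa [← Polynomial.leadingCoeff])
      rwa [← Polynomial.leadingCoeff] at this
    set T := Fintype.piFinset fun _ : Fin m => C with hT
    set B := T.filter (fun t => MvPolynomial.eval t lc = 0) with hB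
    have hIH : B.card * C.card ≤ lc.totalDegree * C.card ^ m := IH lc hlc0 C
    set Z := (Fintype.piFinset fun _ : Fin (m+1) => C).filter
        (fun a => MvPolynomial.eval a p = 0) with hZ
    -- fiberwise count over the tail
    have htail : ∀ a ∈ Z, Fin.tail a ∈ T := by
      intro a ha
      rw [hZ, Finset.mem_filter] at ha
      rw [hT, Fintype.mem_piFinset]
      intro i
      exact (Fintype.mem_piFinset.mp ha.1) i.succ
    have hcard : Z.card = ∑ t ∈ T, (Z.filter fun a => Fin.tail a = t).card :=
      Finset.card_eq_sum_card_fiberwise htail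
    -- each fiber has card ≤ C.card
    have hfib_all : ∀ t : Fin m → F, (Z.filter fun a => Fin.tail a = t).card ≤ C.card := by
      intro t
      apply Finset.card_le_card_of_injOn (fun a => a 0)
      · intro a ha
        simp only [Finset.mem_coe] at ha
        rw [Finset.mem_filter, hZ, Finset.mem_filter] at ha
        exact (Fintype.mem_piFinset.mp ha.1.1) 0
      · intro a ha b hb hab
        simp only [Finset.mem_coe, Finset.mem_filter] at ha hb
        have h0 : a 0 = b 0 := hab
        calc a = Fin.cons (a 0) (Fin.tail a) := (Fin.cons_self_tail a).symm
          _ = Fin.cons (b 0) (Fin.tail b) := by rw [h0, ha.2, hb.2]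
          _ = b := Fin.cons_self_tail b
    -- good fibers have card ≤ k
    have hfib_good : ∀ t ∈ T, t ∉ B → (Z.filter fun a => Fin.tail a = t).card ≤ k := by
      intro t hti htb
      have hlct : MvPolynomial.eval t lc ≠ 0 := by
        intro h
        exact htb (Finset.mem_filter.mpr ⟨hti, h⟩)
      set qt := Polynomial.map (MvPolynomial.eval t) q with hqt
      have hqt0 : qt ≠ 0 := by
        intro h
        have := Polynomial.leadingCoeff_map_of_leadingCoeff_ne_zero
          (MvPolynomial.eval t) hlct (p := q)
        rw [← hqt, h] at this
        simp at this
        exact hlct this.symm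
      have hqtdeg : qt.natDegree ≤ k := Polynomial.natDegree_map_le
      calc (Z.filter fun a => Fin.tail a = t).card
          ≤ qt.roots.toFinset.card := by
            apply Finset.card_le_card_of_injOn (fun a => a 0)
            · intro a ha
              simp only [Finset.mem_coe, Finset.mem_filter] at ha
              have haZ := ha.1
              rw [hZ, Finset.mem_filter] at haZ
              have : MvPolynomial.eval (Fin.cons (a 0) t) p = 0 := by
                rw [← ha.2, Fin.cons_self_tail]
                exact haZ.2
              rw [MvPolynomial.eval_eq_eval_mv_eval'] at this
              exact Multiset.mem_toFinset.mpr ((Polynomial.mem_roots hqt0).mpr this)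
            · intro a ha b hb hab
              simp only [Finset.mem_coe, Finset.mem_filter] at ha hb
              have h0 : a 0 = b 0 := hab
              calc a = Fin.cons (a 0) (Fin.tail a) := (Fin.cons_self_tail a).symm
                _ = Fin.cons (b 0) (Fin.tail b) := by rw [h0, ha.2, hb.2]
                _ = b := Fin.cons_self_tail b
        _ ≤ Multiset.card qt.roots := Multiset.toFinset_card_le _
        _ ≤ qt.natDegree := Polynomial.card_roots' qt
        _ ≤ k := hqtdeg
    -- combine
    have hsplit : Z.card ≤ B.card * C.card + C.card ^ m * k := by
      rw [hcard, ← Finset.sum_filter_add_sum_filter_not T (fun t => t ∈ B)]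
      have h1 : ∑ t ∈ T.filter (fun t => t ∈ B), (Z.filter fun a => Fin.tail a = t).card
          ≤ B.card * C.card := by
        calc _ ≤ ∑ _t ∈ T.filter (fun t => t ∈ B), C.card :=
              Finset.sum_le_sum fun t _ => hfib_all t
          _ ≤ B.card * C.card := by
              rw [Finset.sum_const, smul_eq_mul]
              gcongr
              intro t ht
              exact (Finset.mem_filter.mp ht).2
      have h2 : ∑ t ∈ T.filter (fun t => t ∉ B), (Z.filter fun a => Fin.tail a = t).card
          ≤ C.card ^ m * k := by
        calc _ ≤ ∑ _t ∈ T.filter (fun t => t ∉ B), k :=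
              Finset.sum_le_sum fun t ht => by
                rw [Finset.mem_filter] at ht
                exact hfib_good t ht.1 ht.2
          _ ≤ C.card ^ m * k := by
              rw [Finset.sum_const, smul_eq_mul]
              gcongr
              calc (T.filter (fun t => t ∉ B)).card ≤ T.card := Finset.card_filter_le _ _
                _ = C.card ^ m := by simp [hT]
      omega
    calc Z.card * C.card ≤ (B.card * C.card + C.card ^ m * k) * C.card := by gcongr
      _ = B.card * C.card * C.card + k * C.card ^ (m+1) := by ring
      _ ≤ lc.totalDegree * C.card ^ m * C.card + k * C.card ^ (m+1) := by gcongr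
      _ = (lc.totalDegree + k) * C.card ^ (m+1) := by ring
      _ ≤ p.totalDegree * C.card ^ (m+1) := by gcongr

/-- **Schwartz–Zippel lemma.** If `p` is a nonzero polynomial in `m` variables over a field `F`
of total degree at most `d`, and `C` is a nonempty finite subset of `F`, then the probability
that `p` vanishes at a point of `C^m` chosen uniformly at random (each coordinate independent
and uniform on `C`, i.e. each point of `C^m` has probability `|C|^{-m}`) is at most `d / |C|`. -/
theorem schwartz_zippel {F : Type*} [Field F] [DecidableEq F] {m d : ℕ}
    (p : MvPolynomial (Fin m) F) (hp : p ≠ 0) (hd : p.totalDegree ≤ d)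
    (C : Finset F) (hC : C.Nonempty) :
    (((Fintype.piFinset fun _ : Fin m => C).filter
        fun a => MvPolynomial.eval a p = 0).card : ℝ) / (C.card : ℝ) ^ m
      ≤ (d : ℝ) / (C.card : ℝ) := by
  have hCpos : (0 : ℝ) < (C.card : ℝ) := by
    exact_mod_cast Finset.card_pos.mpr hC
  have key := schwartz_zippel_nat m p hp C
  have key' : ((Fintype.piFinset fun _ : Fin m => C).filter
      fun a => MvPolynomial.eval a p = 0).card * C.card ≤ d * C.card ^ m :=
    key.trans (by gcongr)
  rw [div_le_div_iff₀ (by positivity) hCpos]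
  exact_mod_cast key'
end

section
/- Let F be a field, let p be a polynomial in m variables (m ≥ 1) with coefficients in F that is not the zero polynomial and has total degree at most d, and let C be a nonempty finite subset of F. Then the number of points a ∈ C^m with p(a) = 0 is at most d · |C|^{m-1}. -/
/-!
Multiplying Mathlib's probabilistic Schwartz–Zippel bound
`#zeros / #C ^ m ≤ totalDegree p / #C` through by `#C ^ m` gives the count. The two degenerate
cases are immediate: with no variables `p` is a nonzero constant, and `C^m` is empty when `C` is.
-/

open Finset

namespace MvPolynomial

variable {R : Type*} [CommRing R] [IsDomain R] [DecidableEq R]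

theorem card_zeros_le_totalDegree_mul_card_pow_pred {n : ℕ} {p : MvPolynomial (Fin n) R}
    (hp : p ≠ 0) (S : Finset R) :
    #{x ∈ Fintype.piFinset fun _ ↦ S | eval x p = 0} ≤ p.totalDegree * #S ^ (n - 1) := by
  cases n with
  | zero =>
    rw [p.eq_C_of_isEmpty] at hp ⊢
    simp [C_ne_zero.mp hp]
  | succ n =>
    obtain rfl | hS := S.eq_empty_or_nonempty
    · simp
    have hS : 0 < #S := hS.card_pos
    have hbound := schwartz_zippel_totalDegree hp S
    rw [div_le_div_iff₀ (by positivity) (by positivity)] at hbound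
    have hcount : #{x ∈ Fintype.piFinset fun _ ↦ S | eval x p = 0} * #S
        ≤ p.totalDegree * #S ^ n * #S := by
      rw [mul_assoc, ← pow_succ]
      exact_mod_cast hbound
    exact Nat.le_of_mul_le_mul_right hcount hS

end MvPolynomial

theorem schwartz_zippel_card_general {F : Type*} [Field F] [DecidableEq F] {m d : ℕ}
    (p : MvPolynomial (Fin m) F) (hp : p ≠ 0) (hd : p.totalDegree ≤ d)
    (C : Finset F) :
    ((Fintype.piFinset fun _ : Fin m => C).filter
        fun a => MvPolynomial.eval a p = 0).card ≤ d * C.card ^ (m - 1) :=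
  (MvPolynomial.card_zeros_le_totalDegree_mul_card_pow_pred hp C).trans
    (Nat.mul_le_mul_right _ hd)

/-- Counting form of the Schwartz–Zippel lemma: a nonzero polynomial in `m ≥ 1` variables of
total degree at most `d` has at most `d * |C|^(m-1)` zeros in `C^m`. -/
theorem schwartz_zippel_card {F : Type*} [Field F] [DecidableEq F] {m d : ℕ} (hm : 1 ≤ m)
    (p : MvPolynomial (Fin m) F) (hp : p ≠ 0) (hd : p.totalDegree ≤ d)
    (C : Finset F) (hC : C.Nonempty) :
    ((Fintype.piFinset fun _ : Fin m => C).filter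
        fun a => MvPolynomial.eval a p = 0).card ≤ d * C.card ^ (m - 1) :=
  schwartz_zippel_card_general p hp hd C
end

section
/- Let F be a field, let p and q be polynomials in m variables over F, each of total degree at most d, with p ≠ q as polynomials, and let C be a nonempty finite subset of F. If r_1, ..., r_m are chosen independently and uniformly at random from C, then the probability that p(r_1, ..., r_m) = q(r_1, ..., r_m) is at most d / |C|. -/
open MvPolynomial Finset

theorem sz_card {F : Type*} [Field F] [DecidableEq F] :
    ∀ (m : ℕ) (f : MvPolynomial (Fin m) F), f ≠ 0 → ∀ C : Finset F,
    ((Fintype.piFinset fun _ : Fin m => C).filter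
        fun a => MvPolynomial.eval a f = 0).card * C.card ≤ f.totalDegree * C.card ^ m := by
  intro m
  induction m with
  | zero =>
    intro f hf C
    obtain ⟨c, rfl⟩ := (MvPolynomial.C_surjective (Fin 0)) f
    have hc : c ≠ 0 := fun h => hf (by simp [h])
    have hemp : ((Fintype.piFinset fun _ : Fin 0 => C).filter
        fun a => MvPolynomial.eval a (MvPolynomial.C c) = 0) = ∅ := by
      apply Finset.filter_false_of_mem
      intro a _
      simpa using hc
    rw [hemp]
    simp
  | succ m ih =>
    intro f hf C
    set g := finSuccEquiv F m f with hg
    have hg0 : g ≠ 0 := by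
      simp only [hg, ne_eq, EmbeddingLike.map_eq_zero_iff]
      exact hf
    set k := g.natDegree with hk
    set h := g.coeff k with hh
    have hh0 : h ≠ 0 := by
      rw [hh, hk]
      exact Polynomial.leadingCoeff_ne_zero.mpr hg0
    have hdeg : h.totalDegree + k ≤ f.totalDegree :=
      totalDegree_coeff_finSuccEquiv_add_le f k hh0
    set T := Fintype.piFinset fun _ : Fin m => C with hT
    set S := (Fintype.piFinset fun _ : Fin (m + 1) => C).filter
        fun a => MvPolynomial.eval a f = 0 with hS
    -- S is covered by the biUnion over tails
    have hsub : S ⊆ T.biUnion fun t =>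
        (C.filter fun x => MvPolynomial.eval (Fin.cons x t) f = 0).image fun x => Fin.cons x t := by
      intro a ha
      rw [hS, Finset.mem_filter] at ha
      obtain ⟨hamem, haeval⟩ := ha
      rw [Fintype.mem_piFinset] at hamem
      rw [Finset.mem_biUnion]
      refine ⟨Fin.tail a, ?_, ?_⟩
      · rw [hT, Fintype.mem_piFinset]; exact fun i => hamem i.succ
      · rw [Finset.mem_image]
        refine ⟨a 0, ?_, ?_⟩
        · rw [Finset.mem_filter]
          refine ⟨hamem 0, ?_⟩
          rw [Fin.cons_self_tail]; exact haeval
        · exact Fin.cons_self_tail a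
    have hcard1 : S.card ≤ ∑ t ∈ T, (C.filter fun x => MvPolynomial.eval (Fin.cons x t) f = 0).card :=
      le_trans (Finset.card_le_card hsub)
        (le_trans (Finset.card_biUnion_le) (Finset.sum_le_sum fun t _ => Finset.card_image_le))
    -- split the sum over whether `eval t h = 0`
    have hsplit : ∑ t ∈ T, (C.filter fun x => MvPolynomial.eval (Fin.cons x t) f = 0).card
        = (∑ t ∈ T.filter fun t => MvPolynomial.eval t h = 0,
            (C.filter fun x => MvPolynomial.eval (Fin.cons x t) f = 0).card)
          + ∑ t ∈ T.filter fun t => ¬ MvPolynomial.eval t h = 0,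
            (C.filter fun x => MvPolynomial.eval (Fin.cons x t) f = 0).card :=
      (Finset.sum_filter_add_sum_filter_not T _ _).symm
    set A := T.filter fun t => MvPolynomial.eval t h = 0 with hA
    have hAcard : A.card * C.card ≤ h.totalDegree * C.card ^ m := ih h hh0 C
    have hbound1 : ∑ t ∈ A, (C.filter fun x => MvPolynomial.eval (Fin.cons x t) f = 0).card
        ≤ A.card * C.card := by
      calc ∑ t ∈ A, (C.filter fun x => MvPolynomial.eval (Fin.cons x t) f = 0).card
          ≤ ∑ _t ∈ A, C.card := Finset.sum_le_sum fun t _ => Finset.card_filter_le _ _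
        _ = A.card * C.card := by rw [Finset.sum_const, smul_eq_mul]
    have hbound2 : ∀ t ∈ T.filter fun t => ¬ MvPolynomial.eval t h = 0,
        (C.filter fun x => MvPolynomial.eval (Fin.cons x t) f = 0).card ≤ k := by
      intro t ht
      rw [Finset.mem_filter] at ht
      set P := Polynomial.map (MvPolynomial.eval t) g with hP
      have hPk : P.coeff k ≠ 0 := by
        rw [hP, Polynomial.coeff_map]; exact ht.2
      have hP0 : P ≠ 0 := fun h0 => hPk (by simp [h0])
      have hPdeg : P.natDegree ≤ k := Polynomial.natDegree_map_le
      have hsub2 : (C.filter fun x => MvPolynomial.eval (Fin.cons x t) f = 0)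
          ⊆ P.roots.toFinset := by
        intro x hx
        rw [Finset.mem_filter] at hx
        rw [Multiset.mem_toFinset, Polynomial.mem_roots hP0]
        have := hx.2
        rw [eval_eq_eval_mv_eval'] at this
        exact this
      calc (C.filter fun x => MvPolynomial.eval (Fin.cons x t) f = 0).card
          ≤ P.roots.toFinset.card := Finset.card_le_card hsub2
        _ ≤ Multiset.card P.roots := Multiset.toFinset_card_le _
        _ ≤ P.natDegree := Polynomial.card_roots' P
        _ ≤ k := hPdeg
    have hTcard : T.card = C.card ^ m := by
      rw [hT, Fintype.card_piFinset]; simp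
    have hbound2' : ∑ t ∈ T.filter fun t => ¬ MvPolynomial.eval t h = 0,
        (C.filter fun x => MvPolynomial.eval (Fin.cons x t) f = 0).card ≤ C.card ^ m * k := by
      calc ∑ t ∈ T.filter fun t => ¬ MvPolynomial.eval t h = 0,
          (C.filter fun x => MvPolynomial.eval (Fin.cons x t) f = 0).card
          ≤ ∑ _t ∈ T.filter fun t => ¬ MvPolynomial.eval t h = 0, k :=
            Finset.sum_le_sum hbound2
        _ = (T.filter fun t => ¬ MvPolynomial.eval t h = 0).card * k := by
            rw [Finset.sum_const, smul_eq_mul]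
        _ ≤ T.card * k := Nat.mul_le_mul_right _ (Finset.card_filter_le _ _)
        _ = C.card ^ m * k := by rw [hTcard]
    have hN : S.card ≤ A.card * C.card + C.card ^ m * k := by
      calc S.card ≤ _ := hcard1
        _ = _ := hsplit
        _ ≤ A.card * C.card + C.card ^ m * k := Nat.add_le_add hbound1 hbound2'
    calc S.card * C.card ≤ (A.card * C.card + C.card ^ m * k) * C.card :=
           Nat.mul_le_mul_right _ hN
      _ = A.card * C.card * C.card + k * C.card ^ (m + 1) := by ring
      _ ≤ h.totalDegree * C.card ^ m * C.card + k * C.card ^ (m + 1) :=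
           Nat.add_le_add_right (Nat.mul_le_mul_right _ hAcard) _
      _ = (h.totalDegree + k) * C.card ^ (m + 1) := by ring
      _ ≤ f.totalDegree * C.card ^ (m + 1) := Nat.mul_le_mul_right _ hdeg

/-- Identity-testing form of the Schwartz–Zippel lemma: if `p ≠ q` are polynomials in `m`
variables of total degree at most `d`, the probability that they agree at a uniformly random
point of `C^m` is at most `d / |C|`. -/
theorem identity_testing {F : Type*} [Field F] [DecidableEq F] {m d : ℕ}
    (p q : MvPolynomial (Fin m) F) (hpq : p ≠ q)
    (hp : p.totalDegree ≤ d) (hq : q.totalDegree ≤ d)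
    (C : Finset F) (hC : C.Nonempty) :
    (((Fintype.piFinset fun _ : Fin m => C).filter
        fun a => MvPolynomial.eval a p = MvPolynomial.eval a q).card : ℝ) / (C.card : ℝ) ^ m
      ≤ (d : ℝ) / (C.card : ℝ) := by
  have hf : p - q ≠ 0 := sub_ne_zero.mpr hpq
  have hdf : (p - q).totalDegree ≤ d :=
    le_trans (MvPolynomial.totalDegree_sub p q) (max_le hp hq)
  have hfilter : ((Fintype.piFinset fun _ : Fin m => C).filter
        fun a => MvPolynomial.eval a p = MvPolynomial.eval a q)
      = ((Fintype.piFinset fun _ : Fin m => C).filter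
        fun a => MvPolynomial.eval a (p - q) = 0) := by
    apply Finset.filter_congr
    intro a _
    simp [sub_eq_zero]
  have key := sz_card m (p - q) hf C
  have key2 : ((Fintype.piFinset fun _ : Fin m => C).filter
        fun a => MvPolynomial.eval a (p - q) = 0).card * C.card ≤ d * C.card ^ m :=
    le_trans key (Nat.mul_le_mul_right _ hdf)
  have hCpos : (0 : ℝ) < (C.card : ℝ) := by
    exact_mod_cast Finset.card_pos.mpr hC
  have hCpow : (0 : ℝ) < (C.card : ℝ) ^ m := pow_pos hCpos m
  rw [hfilter, div_le_div_iff₀ hCpow hCpos]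
  calc (((Fintype.piFinset fun _ : Fin m => C).filter
        fun a => MvPolynomial.eval a (p - q) = 0).card : ℝ) * (C.card : ℝ)
      ≤ (d : ℝ) * (C.card : ℝ) ^ m := by exact_mod_cast key2
    _ = (d : ℝ) * (C.card : ℝ) ^ m := rfl
end

section
/- Let F be a field, let C be a nonempty finite subset of F, let I and J be finite types, and consider the multivariate polynomial ring over F with indeterminates X_{(i,j)} indexed by I × J. Let χ, ξ : {1, ..., n} → I and χ', ξ' : {1, ..., n} → J be index assignments, and let D_1 = det[(i,j) ↦ X_{(χ(i), χ'(j))}] and D_2 = det[(i,j) ↦ X_{(ξ(i), ξ'(j))}] be the corresponding n × n determinant polynomials. If D_1 ≠ D_2 as polynomials, then for a random assignment S : I × J → C with all values chosen independently and uniformly at random from C, the probability that D_1 and D_2 evaluate to the same element of F at S is at most n / |C|. -/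
/-!
Every term of a determinant of indeterminates is a product of `n` of them, so `D₁ - D₂` is a
nonzero polynomial of total degree at most `n`, and the two determinants agree at `S` exactly
when `D₁ - D₂` vanishes there. The Schwartz–Zippel lemma bounds the proportion of points of
`C ^ (I × J)` at which such a polynomial vanishes by `n / |C|`.
-/

open MvPolynomial Finset

namespace MvPolynomial

variable {R : Type*} [CommRing R]

lemma totalDegree_det_le {n σ : Type*} [Fintype n] [DecidableEq n]
    (M : Matrix n n (MvPolynomial σ R)) {d : ℕ} (hM : ∀ i j, (M i j).totalDegree ≤ d) :
    M.det.totalDegree ≤ Fintype.card n * d := by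
  rw [Matrix.det_apply]
  refine totalDegree_finsetSum_le fun τ _ => (totalDegree_smul_le _ _).trans ?_
  calc (∏ i, M (τ i) i).totalDegree ≤ ∑ i, (M (τ i) i).totalDegree := totalDegree_finsetProd _ _
    _ ≤ ∑ _i : n, d := sum_le_sum fun i _ => hM _ _
    _ = Fintype.card n * d := by simp

lemma totalDegree_det_of_X_le [Nontrivial R] {n σ : Type*} [Fintype n] [DecidableEq n]
    (v : n → n → σ) :
    (Matrix.of fun i j => (X (v i j) : MvPolynomial σ R)).det.totalDegree ≤ Fintype.card n := by
  simpa using totalDegree_det_le (Matrix.of fun i j => (X (v i j) : MvPolynomial σ R))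
    (d := 1) fun i j => (totalDegree_X _).le

variable [IsDomain R] [DecidableEq R]

lemma schwartz_zippel_totalDegree_of_fintype {σ : Type*} [Fintype σ] [DecidableEq σ]
    {p : MvPolynomial σ R} (hp : p ≠ 0) (S : Finset R) :
    #{f ∈ Fintype.piFinset fun _ ↦ S | eval f p = 0} / (#S ^ Fintype.card σ : ℚ≥0)
      ≤ p.totalDegree / #S := by
  set e := Fintype.equivFin σ
  have hp' : renameEquiv R e p ≠ 0 := (renameEquiv R e).injective.ne_iff' (map_zero _) |>.2 hp
  have hcard : #{f ∈ Fintype.piFinset fun _ ↦ S | eval f p = 0}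
      = #{g ∈ Fintype.piFinset fun _ ↦ S | eval g (renameEquiv R e p) = 0} := by
    refine card_equiv (e.arrowCongr (Equiv.refl R)) fun f => ?_
    simp only [mem_filter, Fintype.mem_piFinset, renameEquiv_apply, eval_rename]
    exact and_congr e.symm.forall_congr_right.symm (by simp [Function.comp_def])
  rw [hcard, ← totalDegree_renameEquiv e p]
  exact_mod_cast schwartz_zippel_totalDegree hp' S

end MvPolynomial

theorem det_identity_testing_general {F : Type*} [Field F] [DecidableEq F]
    {I J : Type*} [Fintype I] [Fintype J] [DecidableEq I] [DecidableEq J]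
    (C : Finset F) {n : ℕ}
    (χ ξ : Fin n → I) (χ' ξ' : Fin n → J)
    (hne : Matrix.det (Matrix.of fun i j =>
            (MvPolynomial.X (χ i, χ' j) : MvPolynomial (I × J) F))
         ≠ Matrix.det (Matrix.of fun i j =>
            (MvPolynomial.X (ξ i, ξ' j) : MvPolynomial (I × J) F))) :
    (((Fintype.piFinset fun _ : I × J => C).filter fun S =>
        MvPolynomial.eval S (Matrix.det (Matrix.of fun i j =>
          (MvPolynomial.X (χ i, χ' j) : MvPolynomial (I × J) F)))
          = MvPolynomial.eval S (Matrix.det (Matrix.of fun i j =>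
          (MvPolynomial.X (ξ i, ξ' j) : MvPolynomial (I × J) F)))).card : ℝ)
      / (C.card : ℝ) ^ (Fintype.card (I × J))
      ≤ (n : ℝ) / (C.card : ℝ) := by
  have hdeg : (Matrix.det (Matrix.of fun i j => (X (χ i, χ' j) : MvPolynomial (I × J) F)) -
      Matrix.det (Matrix.of fun i j => X (ξ i, ξ' j))).totalDegree ≤ n := by
    simpa using (totalDegree_sub _ _).trans
      (max_le (totalDegree_det_of_X_le fun i j => (χ i, χ' j))
        (totalDegree_det_of_X_le fun i j => (ξ i, ξ' j)))
  have key := (schwartz_zippel_totalDegree_of_fintype (sub_ne_zero.2 hne) C).trans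
    (div_le_div_of_nonneg_right (Nat.cast_le.2 hdeg) (Nat.cast_nonneg _))
  simp only [map_sub, sub_eq_zero] at key
  have key_real := NNRat.cast_le (K := ℝ) |>.2 key
  push_cast at key_real
  exact key_real

/-- Identity testing for determinant polynomials: if the two `n × n` determinant polynomials in
the indeterminates `X (i, j)`, `(i, j) ∈ I × J`, built from index assignments `(χ, χ')` and
`(ξ, ξ')` are distinct as polynomials, then for a random assignment `S : I × J → C` with all
values independent and uniform on the nonempty finite set `C ⊆ F`, the probability that the two
determinants evaluate to the same element of `F` is at most `n / |C|`. -/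
theorem det_identity_testing {F : Type*} [Field F] [DecidableEq F]
    {I J : Type*} [Fintype I] [Fintype J] [DecidableEq I] [DecidableEq J]
    (C : Finset F) (hC : C.Nonempty) {n : ℕ}
    (χ ξ : Fin n → I) (χ' ξ' : Fin n → J)
    (hne : Matrix.det (Matrix.of fun i j =>
            (MvPolynomial.X (χ i, χ' j) : MvPolynomial (I × J) F))
         ≠ Matrix.det (Matrix.of fun i j =>
            (MvPolynomial.X (ξ i, ξ' j) : MvPolynomial (I × J) F))) :
    (((Fintype.piFinset fun _ : I × J => C).filter fun S =>
        MvPolynomial.eval S (Matrix.det (Matrix.of fun i j =>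
          (MvPolynomial.X (χ i, χ' j) : MvPolynomial (I × J) F)))
          = MvPolynomial.eval S (Matrix.det (Matrix.of fun i j =>
          (MvPolynomial.X (ξ i, ξ' j) : MvPolynomial (I × J) F)))).card : ℝ)
      / (C.card : ℝ) ^ (Fintype.card (I × J))
      ≤ (n : ℝ) / (C.card : ℝ) :=
  det_identity_testing_general C χ ξ χ' ξ' hne
end

section
/- Let R be a commutative ring, let n ≥ 1, let t_1, ..., t_A be pairwise disjoint transpositions in the symmetric group S_n, let H be the subgroup of S_n generated by t_1, ..., t_A, and let f : S_n → R be a function satisfying f(σ ∘ t_i) = −f(σ) for every σ ∈ S_n and every i = 1, ..., A. Then for any set T ⊆ S_n containing exactly one representative of each right coset σH, one has Σ_{σ ∈ S_n} sgn(σ) · f(σ) = 2^A · Σ_{σ ∈ T} sgn(σ) · f(σ). -/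
/-- The `2^A` reduction of the Wick-contraction permutation sum: if `f` flips sign under right
multiplication by each of `A` pairwise disjoint transpositions `t i`, and `T` contains exactly
one representative of each coset `σH` of the subgroup `H` generated by the `t i`, then the full
signed sum over `S_n` equals `2^A` times the signed sum over `T`. -/
theorem signed_sum_coset_reduction {R : Type*} [CommRing R] {n A : ℕ} (hn : 1 ≤ n)
    (t : Fin A → Equiv.Perm (Fin n)) (ht : ∀ i, (t i).IsSwap)
    (hdisj : Pairwise fun i j => Equiv.Perm.Disjoint (t i) (t j))
    (f : Equiv.Perm (Fin n) → R)
    (hf : ∀ σ, ∀ i, f (σ * t i) = - f σ)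
    (T : Finset (Equiv.Perm (Fin n)))
    (hT : ∀ σ : Equiv.Perm (Fin n),
      ∃! τ, τ ∈ T ∧ σ⁻¹ * τ ∈ Subgroup.closure (Set.range t)) :
    ∑ σ : Equiv.Perm (Fin n), ((Equiv.Perm.sign σ : ℤ) : R) * f σ
      = 2 ^ A * ∑ σ ∈ T, ((Equiv.Perm.sign σ : ℤ) : R) * f σ := by
  classical
  set H := Subgroup.closure (Set.range t) with hHdef
  set g : Equiv.Perm (Fin n) → R := fun σ => ((Equiv.Perm.sign σ : ℤ) : R) * f σ with hgdef
  have hcomm : ∀ x ∈ Set.range t, ∀ y ∈ Set.range t, x * y = y * x := by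
    rintro _ ⟨i, rfl⟩ _ ⟨j, rfl⟩
    rcases eq_or_ne i j with rfl | hij
    · rfl
    · exact (hdisj hij).commute.eq
  letI : CommGroup H := Subgroup.closureCommGroupOfComm hcomm
  set u : Fin A → H := fun i => ⟨t i, Subgroup.subset_closure ⟨i, rfl⟩⟩ with hudef
  have hti : ∀ i, t i * t i = 1 := by
    intro i
    obtain ⟨x, y, hxy, hsw⟩ := ht i
    rw [hsw]; exact Equiv.swap_mul_self x y
  have hu2 : ∀ i, u i * u i = 1 := fun i => Subtype.ext (hti i)
  set Φ : Finset (Fin A) → H := fun S => ∏ i ∈ S, u i with hΦdef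
  have Φsq : ∀ S, Φ S * Φ S = 1 := by
    intro S
    show (∏ i ∈ S, u i) * ∏ i ∈ S, u i = 1
    rw [← Finset.prod_mul_distrib]
    exact Finset.prod_eq_one fun i _ => hu2 i
  have pu : ∀ (X Y : Finset (Fin A)), Disjoint X Y → Φ (X ∪ Y) = Φ X * Φ Y :=
    fun X Y h => Finset.prod_union h
  have Φmul : ∀ S S', Φ S * Φ S' = Φ (symmDiff S S') := by
    intro S S'
    have e1 : Φ S = Φ (S \ S') * Φ (S ∩ S') := by
      rw [← pu _ _ (Finset.disjoint_sdiff_inter S S'), Finset.sdiff_union_inter]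
    have e2 : Φ S' = Φ (S' \ S) * Φ (S ∩ S') := by
      rw [Finset.inter_comm S S', ← pu _ _ (Finset.disjoint_sdiff_inter S' S),
        Finset.sdiff_union_inter]
    have h3 : symmDiff S S' = (S \ S') ∪ (S' \ S) := by
      rw [symmDiff_def, Finset.sup_eq_union]
    rw [e1, e2, mul_mul_mul_comm, Φsq, mul_one, ← pu _ _ disjoint_sdiff_sdiff, ← h3]
  -- a product of `t j`'s all fixing `x` fixes `x`
  have hfix : ∀ (U : Finset (Fin A)) (x : Fin n), (∀ j ∈ U, t j x = x) →
      ((Φ U : Equiv.Perm (Fin n))) x = x := by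
    intro U
    induction U using Finset.induction_on with
    | empty => intro x _; simp [hΦdef]
    | @insert a U hna ih =>
      intro x hall
      have h1 : Φ (insert a U) = u a * Φ U := Finset.prod_insert hna
      rw [h1]
      have : ((u a * Φ U : H) : Equiv.Perm (Fin n)) = t a * (Φ U : Equiv.Perm (Fin n)) := rfl
      rw [this, Equiv.Perm.mul_apply, ih x fun j hj => hall j (Finset.mem_insert_of_mem hj)]
      exact hall a (Finset.mem_insert_self a U)
  have Φinj : ∀ S S', (Φ S : Equiv.Perm (Fin n)) = (Φ S' : Equiv.Perm (Fin n)) → S = S' := by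
    intro S S' heq
    have hΦeq : Φ S = Φ S' := Subtype.ext heq
    have h1 : Φ (symmDiff S S') = 1 := by rw [← Φmul, hΦeq, Φsq]
    by_contra hne
    have hne' : symmDiff S S' ≠ ∅ := by
      intro h0
      exact hne (by simpa [symmDiff_eq_bot] using h0)
    obtain ⟨i, hi⟩ := Finset.nonempty_iff_ne_empty.mpr hne'
    obtain ⟨x, y, hxy, hsw⟩ := ht i
    have hx : t i x ≠ x := by
      rw [hsw, Equiv.swap_apply_left]; exact fun h => hxy h.symm
    have h2 : Φ (symmDiff S S') = u i * Φ ((symmDiff S S').erase i) :=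
      (Finset.mul_prod_erase _ _ hi).symm
    have h3 : ((Φ ((symmDiff S S').erase i) : H) : Equiv.Perm (Fin n)) x = x := by
      apply hfix
      intro j hj
      have hji : j ≠ i := Finset.ne_of_mem_erase hj
      rcases (hdisj hji.symm) x with h | h
      · exact absurd h hx
      · exact h
    have h4 : ((Φ (symmDiff S S') : H) : Equiv.Perm (Fin n)) x = t i x := by
      rw [h2]
      have : ((u i * Φ ((symmDiff S S').erase i) : H) : Equiv.Perm (Fin n))
          = t i * (Φ ((symmDiff S S').erase i) : Equiv.Perm (Fin n)) := rfl
      rw [this, Equiv.Perm.mul_apply, h3]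
    rw [h1] at h4
    exact hx (by simpa using h4.symm)
  -- surjectivity
  have hsurj : ∀ h : Equiv.Perm (Fin n), h ∈ H → ∃ S, (Φ S : Equiv.Perm (Fin n)) = h := by
    intro h hh
    induction hh using Subgroup.closure_induction with
    | mem x hx =>
      obtain ⟨i, rfl⟩ := hx
      exact ⟨{i}, by simp [hΦdef, hudef]⟩
    | one => exact ⟨∅, by simp [hΦdef]⟩
    | mul x y hx hy ihx ihy =>
      obtain ⟨S, hS⟩ := ihx
      obtain ⟨S', hS'⟩ := ihy
      refine ⟨symmDiff S S', ?_⟩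
      rw [← Φmul]
      have : ((Φ S * Φ S' : H) : Equiv.Perm (Fin n))
          = (Φ S : Equiv.Perm (Fin n)) * (Φ S' : Equiv.Perm (Fin n)) := rfl
      rw [this, hS, hS']
    | inv x hx ihx =>
      obtain ⟨S, hS⟩ := ihx
      refine ⟨S, ?_⟩
      have hsq : (Φ S : Equiv.Perm (Fin n)) * (Φ S : Equiv.Perm (Fin n)) = 1 :=
        congrArg Subtype.val (Φsq S)
      rw [← hS]
      exact (inv_eq_of_mul_eq_one_right hsq).symm
  -- sign-flip invariance of g
  have hg1 : ∀ σ i, g (σ * t i) = g σ := by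
    intro σ i
    rw [hgdef]
    simp only
    rw [map_mul, (ht i).sign_eq, hf]
    push_cast
    ring
  have hgH : ∀ h : Equiv.Perm (Fin n), h ∈ H → ∀ σ, g (σ * h) = g σ := by
    intro h hh
    induction hh using Subgroup.closure_induction with
    | mem x hx =>
      obtain ⟨i, rfl⟩ := hx
      exact fun σ => hg1 σ i
    | one => simp
    | mul x y hx hy ihx ihy =>
      intro σ
      rw [← mul_assoc, ihy, ihx]
    | inv x hx ihx =>
      intro σ
      have h2 := ihx (σ * x⁻¹)
      rw [inv_mul_cancel_right] at h2
      exact h2.symm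
  -- coset representative function
  set w : Equiv.Perm (Fin n) → Equiv.Perm (Fin n) := fun σ => (hT σ).choose with hwdef
  have hw1 : ∀ σ, w σ ∈ T ∧ σ⁻¹ * w σ ∈ H := fun σ => (hT σ).choose_spec.1
  have hwuniq : ∀ σ τ, τ ∈ T → σ⁻¹ * τ ∈ H → w σ = τ :=
    fun σ τ hτT hτH => ((hT σ).choose_spec.2 τ ⟨hτT, hτH⟩).symm
  have key : ∀ τ ∈ T, Finset.univ.filter (fun σ => w σ = τ)
      = Finset.image (fun S : Finset (Fin A) => τ * (Φ S : Equiv.Perm (Fin n)))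
          Finset.univ := by
    intro τ hτ
    ext σ
    simp only [Finset.mem_filter, Finset.mem_univ, true_and, Finset.mem_image]
    constructor
    · intro hw
      have hmem : σ⁻¹ * τ ∈ H := hw ▸ (hw1 σ).2
      have hmem' : τ⁻¹ * σ ∈ H := by
        have := inv_mem hmem
        rwa [mul_inv_rev, inv_inv] at this
      obtain ⟨S, hS⟩ := hsurj _ hmem'
      exact ⟨S, by rw [hS, mul_inv_cancel_left]⟩
    · rintro ⟨S, rfl⟩
      apply hwuniq _ _ hτ
      have hgrp : (τ * (Φ S : Equiv.Perm (Fin n)))⁻¹ * τ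
          = ((Φ S : Equiv.Perm (Fin n)))⁻¹ := by group
      rw [hgrp]
      exact inv_mem (SetLike.coe_mem (Φ S))
  calc ∑ σ : Equiv.Perm (Fin n), g σ
      = ∑ τ ∈ T, ∑ σ ∈ Finset.univ.filter (fun σ => w σ = τ), g σ :=
        (Finset.sum_fiberwise_of_maps_to (fun σ _ => (hw1 σ).1) g).symm
    _ = ∑ τ ∈ T, 2 ^ A * g τ := by
        refine Finset.sum_congr rfl fun τ hτ => ?_
        rw [key τ hτ, Finset.sum_image (by
          intro S _ S' _ hSS'
          exact Φinj _ _ (mul_left_cancel hSS'))]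
        have hconst : ∀ S : Finset (Fin A), g (τ * (Φ S : Equiv.Perm (Fin n))) = g τ :=
          fun S => hgH _ (SetLike.coe_mem (Φ S)) τ
        rw [Finset.sum_congr rfl (fun S _ => hconst S), Finset.sum_const, Finset.card_univ,
          Fintype.card_finset, Fintype.card_fin, nsmul_eq_mul]
        push_cast
        ring
    _ = 2 ^ A * ∑ τ ∈ T, g τ := by rw [Finset.mul_sum]
end
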